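/- arXiv:2409.11582 — 3 statements merged into one kernel-verified Lean document; each statement's English description precedes it below -/
import Mathlib

section
/- Let n be an odd integer ≥ 5. There is no finite multiset of angles drawn from {3π/8, 7π/16, π/n} whose sum equals π(1 − 1/(2n)), given that any valid filling uses at most two angles from {3π/8, 7π/16}. -/
open Real
open scoped Classical

theorem stmt3 (n : ℕ) (hn : Odd n) (h5 : 5 ≤ n) :
    ¬ ∃ m : Multiset ℝ,
      (∀ x ∈ m, x ∈ ({3*π/8, 7*π/16, π/n} : Set ℝ)) ∧
      Multiset.card (m.filter fun x => x = 3*π/8 ∨ x = 7*π/16) ≤ 2 ∧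
      m.sum = π * (1 - 1/(2*n)) := by
  rintro ⟨m, hmem, hcard, hsum⟩
  have hπ : (0:ℝ) < π := Real.pi_pos
  have hπ0 : (π:ℝ) ≠ 0 := ne_of_gt hπ
  have hnpos : 0 < n := by omega
  have hn0 : ((n:ℝ)) ≠ 0 := by positivity
  -- π/n is distinct from the other two angles
  have hd1 : π / (n:ℝ) ≠ 3*π/8 := by
    intro h
    have : (8:ℝ) = 3 * n := by
      field_simp at h
      nlinarith [h]
    have : (8:ℝ) < 3 * n := by
      have : (5:ℝ) ≤ n := by exact_mod_cast h5
      nlinarith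
    linarith
  have hd2 : π / (n:ℝ) ≠ 7*π/16 := by
    intro h
    have : (16:ℝ) = 7 * n := by
      field_simp at h
      nlinarith [h]
    have : (16:ℝ) < 7 * n := by
      have : (5:ℝ) ≤ n := by exact_mod_cast h5
      nlinarith
    linarith
  -- decompose the multiset sum by counts
  have key : ∀ s : Multiset ℝ, (∀ x ∈ s, x ∈ ({3*π/8, 7*π/16, π/n} : Set ℝ)) →
      ∃ a b c : ℕ,
        Multiset.card (s.filter fun x => x = 3*π/8 ∨ x = 7*π/16) = a + b ∧
        s.sum = a*(3*π/8) + b*(7*π/16) + c*(π/n) := by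
    intro s
    induction s using Multiset.induction with
    | empty => intro _; exact ⟨0, 0, 0, by simp⟩
    | cons x t ih =>
      intro h
      obtain ⟨a, b, c, h1, h2⟩ := ih (fun y hy => h y (Multiset.mem_cons_of_mem hy))
      have hx := h x (Multiset.mem_cons_self x t)
      simp only [Set.mem_insert_iff, Set.mem_singleton_iff] at hx
      rcases hx with hx | hx | hx
      · refine ⟨a+1, b, c, ?_, ?_⟩
        · rw [Multiset.filter_cons_of_pos t (Or.inl hx), Multiset.card_cons, h1]; ring
        · rw [Multiset.sum_cons, h2, hx]; push_cast; ring
      · refine ⟨a, b+1, c, ?_, ?_⟩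
        · rw [Multiset.filter_cons_of_pos t (Or.inr hx), Multiset.card_cons, h1]; ring
        · rw [Multiset.sum_cons, h2, hx]; push_cast; ring
      · refine ⟨a, b, c+1, ?_, ?_⟩
        · rw [Multiset.filter_cons_of_neg, h1]
          rw [hx]; push_neg; exact ⟨hd1, hd2⟩
        · rw [Multiset.sum_cons, h2, hx]; push_cast; ring
  obtain ⟨a, b, c, h1, h2⟩ := key m hmem
  have hab : a + b ≤ 2 := by rw [h1] at hcard; exact hcard
  rw [h2] at hsum
  -- clear denominators
  have e1 : (16:ℝ)*n * ((a:ℝ)*(3*π/8) + b*(7*π/16) + c*(π/n))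
      = (6*a*n + 7*b*n + 16*c) * π := by field_simp; ring
  have e2 : (16:ℝ)*n * (π*(1 - 1/(2*n))) = (16*n - 8) * π := by field_simp; ring
  have e3 : ((6*(a:ℝ)*n + 7*b*n + 16*c)) * π = (16*(n:ℝ) - 8) * π := by
    rw [← e1, ← e2, hsum]
  have e4 : (6*(a:ℝ)*n + 7*b*n + 16*c) = 16*(n:ℝ) - 8 :=
    mul_right_cancel₀ hπ0 e3
  have e5 : (6*(a:ℤ)*n + 7*b*n + 16*c) = 16*(n:ℤ) - 8 := by exact_mod_cast e4
  obtain ⟨k, hk⟩ := hn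
  have ha : a ≤ 2 := by omega
  have hb : b ≤ 2 := by omega
  interval_cases a <;> interval_cases b <;> omega
end

section
/- Let n be an odd integer ≥ 5. If a finite multiset of angles drawn from {3π/8, 7π/16, 3π/4, 7π/8, π/n, π(1−1/(2n)), π} sums exactly to π(1 + 1/(2n)), then the multiset is {π(1−1/(2n)), π/n}; in particular no element of {3π/8, 7π/16, 3π/4, 7π/8} can appear, and one cannot write π(1 + 1/(2n)) as a sum of copies of π/n and π alone. -/
open Real

private lemma stmt4_decomp (v1 v2 v3 v4 v5 v6 v7 : ℝ) (m : Multiset ℝ)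
    (hm : ∀ x ∈ m, x = v1 ∨ x = v2 ∨ x = v3 ∨ x = v4 ∨ x = v5 ∨ x = v6 ∨ x = v7) :
    ∃ a b c d e f g : ℕ, m = Multiset.replicate a v1 + Multiset.replicate b v2 +
      Multiset.replicate c v3 + Multiset.replicate d v4 + Multiset.replicate e v5 +
      Multiset.replicate f v6 + Multiset.replicate g v7 := by
  induction m using Multiset.induction with
  | empty => exact ⟨0,0,0,0,0,0,0, by simp⟩
  | cons x s ih =>
    obtain ⟨a,b,c,d,e,f,g,h⟩ := ih (fun y hy => hm y (Multiset.mem_cons_of_mem hy))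
    rcases hm x (Multiset.mem_cons_self x s) with h1|h1|h1|h1|h1|h1|h1 <;> subst h1
    · exact ⟨a+1,b,c,d,e,f,g, by rw [h, Multiset.replicate_succ]; simp [Multiset.cons_add]⟩
    · exact ⟨a,b+1,c,d,e,f,g, by rw [h, Multiset.replicate_succ]; simp [Multiset.cons_add]⟩
    · exact ⟨a,b,c+1,d,e,f,g, by rw [h, Multiset.replicate_succ]; simp [Multiset.cons_add]⟩
    · exact ⟨a,b,c,d+1,e,f,g, by rw [h, Multiset.replicate_succ]; simp [Multiset.cons_add]⟩
    · exact ⟨a,b,c,d,e+1,f,g, by rw [h, Multiset.replicate_succ]; simp [Multiset.cons_add]⟩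
    · exact ⟨a,b,c,d,e,f+1,g, by rw [h, Multiset.replicate_succ]; simp [Multiset.cons_add]⟩
    · exact ⟨a,b,c,d,e,f,g+1, by rw [h, Multiset.replicate_succ]; simp [Multiset.cons_add]⟩

private lemma stmt4_counts (n a b c d e f g : ℕ) (hn : Odd n) (h5 : 5 ≤ n)
    (h : 6*n*a + 7*n*b + 12*n*c + 14*n*d + 16*e + (16*n-8)*f + 16*n*g = 16*n+8) :
    a = 0 ∧ b = 0 ∧ c = 0 ∧ d = 0 ∧ e = 1 ∧ f = 1 ∧ g = 0 := by
  obtain ⟨k, hk⟩ := hn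
  obtain ⟨M, hM⟩ : ∃ M, 16*n-8 = M ∧ M + 8 = 16*n := ⟨16*n-8, rfl, by omega⟩
  rw [hM.1] at h
  have hM2 := hM.2
  have ha : a ≤ 2 := by nlinarith
  have hb : b ≤ 2 := by nlinarith
  have hc : c ≤ 1 := by nlinarith
  have hd : d ≤ 1 := by nlinarith
  have hf : f ≤ 1 := by nlinarith
  have hg : g ≤ 1 := by nlinarith
  subst hk
  interval_cases a <;> interval_cases b <;> interval_cases c <;> interval_cases d <;>
    interval_cases f <;> interval_cases g <;> omega

theorem stmt4 (n : ℕ) (hn : Odd n) (h5 : 5 ≤ n) (m : Multiset ℝ)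
    (hm : ∀ x ∈ m, x ∈ ({3*π/8, 7*π/16, 3*π/4, 7*π/8, π/n,
      π*(1 - 1/(2*n)), π} : Set ℝ))
    (hsum : m.sum = π * (1 + 1/(2*n))) :
    m = ({π*(1 - 1/(2*n)), π/n} : Multiset ℝ) ∧
    (∀ x ∈ m, x ∉ ({3*π/8, 7*π/16, 3*π/4, 7*π/8} : Set ℝ)) ∧
    ¬ (∀ x ∈ m, x ∈ ({π/n, π} : Set ℝ)) := by
  have hn0 : (n:ℝ) ≠ 0 := Nat.cast_ne_zero.mpr (by omega)
  have hn5 : (5:ℝ) ≤ (n:ℝ) := by exact_mod_cast h5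
  have hπ : π ≠ 0 := Real.pi_ne_zero
  have hπ0 := Real.pi_pos
  obtain ⟨a,b,c,d,e,f,g,hrep⟩ := stmt4_decomp (3*π/8) (7*π/16) (3*π/4) (7*π/8) (π/n)
      (π*(1 - 1/(2*n))) π m (fun x hx => by simpa using hm x hx)
  have hs : (a:ℝ)*(3*π/8) + b*(7*π/16) + c*(3*π/4) + d*(7*π/8) + e*(π/n)
      + f*(π*(1 - 1/(2*n))) + g*π = π * (1 + 1/(2*n)) := by
    rw [hrep] at hsum
    simpa [Multiset.sum_replicate, nsmul_eq_mul] using hsum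
  have hnat : 6*n*a + 7*n*b + 12*n*c + 14*n*d + 16*e + (16*n-8)*f + 16*n*g = 16*n+8 := by
    have h8 : (8:ℕ) ≤ 16*n := by omega
    have key : ((6*n*a + 7*n*b + 12*n*c + 14*n*d + 16*e + (16*n-8)*f + 16*n*g : ℕ) : ℝ)
        = ((16*n+8 : ℕ) : ℝ) := by
      push_cast [Nat.cast_sub h8]
      field_simp at hs
      apply mul_left_cancel₀ (show (π*(n:ℝ)^2) ≠ 0 from mul_ne_zero hπ (pow_ne_zero _ hn0))
      linear_combination (π*(n:ℝ)^2/64) * hs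
    exact_mod_cast key
  obtain ⟨ha, hb, hc, hd, he, hf, hg⟩ := stmt4_counts n a b c d e f g hn h5 hnat
  subst ha hb hc hd he hf hg
  have hmEq : m = ({π*(1 - 1/(2*n)), π/n} : Multiset ℝ) := by
    rw [hrep]
    simp only [Multiset.replicate_zero, Multiset.replicate_one, zero_add, add_zero,
      Multiset.singleton_add]
    exact Multiset.cons_swap _ _ _
  have hv5lt : π/(n:ℝ) < 3*π/8 := by
    rw [div_lt_iff₀ (by linarith : (0:ℝ) < (n:ℝ))]
    nlinarith [mul_le_mul_of_nonneg_left hn5 hπ0.le]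
  have hv6gt : 7*π/8 < π*(1 - 1/(2*n)) := by
    have h10 : 1/(2*(n:ℝ)) ≤ 1/10 := by
      apply one_div_le_one_div_of_le <;> linarith
    nlinarith
  refine ⟨hmEq, ?_, ?_⟩
  · intro x hx hmem
    rw [hmEq] at hx
    simp only [Multiset.insert_eq_cons, Multiset.mem_cons, Multiset.mem_singleton] at hx
    simp only [Set.mem_insert_iff, Set.mem_singleton_iff] at hmem
    rcases hx with rfl | rfl <;> rcases hmem with h'|h'|h'|h' <;> linarith
  · intro hall
    have hmem : π*(1 - 1/(2*n)) ∈ m := by rw [hmEq]; simp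
    have := hall _ hmem
    simp only [Set.mem_insert_iff, Set.mem_singleton_iff] at this
    have hpos : 0 < π/(2*(n:ℝ)) := div_pos hπ0 (by linarith)
    have hrw : π*(1 - 1/(2*(n:ℝ))) = π - π/(2*(n:ℝ)) := by ring
    rcases this with h' | h' <;> linarith
end

section
/- For ε = π/16, the seven edge lengths ⟨2 − cos ε + sin 2ε, 1, 1, 2(cos 2ε + sin ε), 1, 1, 2 − cos ε + sin 2ε⟩ of the tweedledee gadget, traversed with turning angles determined by α = π/2 − 2ε and β = π/2 − ε as specified, produce a path whose total horizontal displacement is exactly 4 and total vertical displacement is 0. -/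
open Real

theorem stmt15 :
    let ε : ℝ := π/16
    let ℓ : ℝ := 2 - Real.cos ε + Real.sin (2*ε)
    let L : ℝ := 2 * (Real.cos (2*ε) + Real.sin ε)
    let h0 : ℝ := 0
    let h1 : ℝ := h0 + (π/2 + 2*ε)
    let h2 : ℝ := h1 - (π/2 + ε)
    let h3 : ℝ := h2 - (π/2 + ε)
    let h4 : ℝ := h3 + (π/2 + ε)
    let h5 : ℝ := h4 + (π/2 + ε)
    let h6 : ℝ := h5 - (π/2 + 2*ε)
    ℓ * Real.cos h0 + 1 * Real.cos h1 + 1 * Real.cos h2 + L * Real.cos h3 +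
      1 * Real.cos h4 + 1 * Real.cos h5 + ℓ * Real.cos h6 = 4 ∧
    ℓ * Real.sin h0 + 1 * Real.sin h1 + 1 * Real.sin h2 + L * Real.sin h3 +
      1 * Real.sin h4 + 1 * Real.sin h5 + ℓ * Real.sin h6 = 0 := by
  intro ε ℓ L h0 h1 h2 h3 h4 h5 h6
  have c1 : h1 = π/2 + 2*ε := by simp only [h1, h0]; ring
  have c2 : h2 = ε := by simp only [h2, c1]; ring
  have c3 : h3 = -(π/2) := by simp only [h3, c2]; ring
  have c4 : h4 = ε := by simp only [h4, c3]; ring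
  have c5 : h5 = π/2 + 2*ε := by simp only [h5, c4]; ring
  have c6 : h6 = 0 := by simp only [h6, c5]; ring
  rw [c1, c2, c3, c4, c5, c6]
  simp only [h0, Real.cos_zero, Real.sin_zero, Real.cos_add, Real.sin_add, Real.cos_neg, Real.sin_neg, Real.cos_pi_div_two,
    Real.sin_pi_div_two]
  constructor <;> (simp only [ℓ, L]; ring)
end
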